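/- arXiv:2601.09751 — 2 statements merged into one kernel-verified Lean document; each statement's English description precedes it below -/
import Mathlib

section
/- Let f : Γ → Θ be a locally injective homomorphism (graph immersion) between simple graphs. Suppose p is a walk in Γ from a to b of length n and q is a walk in Γ from a' to b' of length n, with f(p.getVert k) = f(q.getVert k) for all 0 ≤ k ≤ n (i.e., p and q are lifts of the same walk in Θ). If there exists an index 0 ≤ i ≤ n with p.getVert i = q.getVert i, then a = a', b = b', and p.getVert k = q.getVert k for all 0 ≤ k ≤ n, so p = q. (Two lifts of a common walk under an immersion that agree at a single position agree everywhere.) -/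
open SimpleGraph

/-- A graph homomorphism is *locally injective* (a graph immersion) if for every
vertex `v` and all neighbors `u`, `w` of `v`, `f u = f w` implies `u = w`. -/
def LocallyInjective {V W : Type*} {Γ : SimpleGraph V} {Θ : SimpleGraph W}
    (f : Γ →g Θ) : Prop :=
  ∀ ⦃v u w : V⦄, Γ.Adj v u → Γ.Adj v w → f u = f w → u = w

/- Agreement of two lifts propagates one step in either direction, since under an immersion two
edges with the same image share one endpoint exactly when they share the other; from the one
index where the lifts agree it therefore spreads over the whole walk. -/

theorem Nat.forall_le_of_iff_succ {P : ℕ → Prop} {n i : ℕ} (hi : i ≤ n) (hPi : P i)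
    (hstep : ∀ k < n, P k ↔ P (k + 1)) : ∀ k ≤ n, P k := by
  have iff_zero : ∀ k ≤ n, P k ↔ P 0 := by
    intro k
    induction k with
    | zero => simp
    | succ k ih => exact fun hk ↦ (hstep k (by omega)).symm.trans (ih (by omega))
  exact fun k hk ↦ (iff_zero k hk).2 ((iff_zero i hi).1 hPi)

namespace LocallyInjective

variable {V W : Type*} {Γ : SimpleGraph V} {Θ : SimpleGraph W} {f : Γ →g Θ}

theorem eq_iff_eq_of_adj (hf : LocallyInjective f) {x y x' y' : V} (h : Γ.Adj x y)
    (h' : Γ.Adj x' y') (hx : f x = f x') (hy : f y = f y') : x = x' ↔ y = y' := by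
  constructor
  · rintro rfl
    exact hf h h' hy
  · rintro rfl
    exact hf h.symm h'.symm hx

theorem getVert_eq_iff_getVert_succ_eq (hf : LocallyInjective f) {a b a' b' : V}
    {p : Γ.Walk a b} {q : Γ.Walk a' b'} {k : ℕ} (hkp : k < p.length) (hkq : k < q.length)
    (hk : f (p.getVert k) = f (q.getVert k))
    (hk' : f (p.getVert (k + 1)) = f (q.getVert (k + 1))) :
    p.getVert k = q.getVert k ↔ p.getVert (k + 1) = q.getVert (k + 1) :=
  hf.eq_iff_eq_of_adj (p.adj_getVert_succ hkp) (q.adj_getVert_succ hkq) hk hk'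

end LocallyInjective

/-- Two lifts of a common walk under a graph immersion that agree at a single
position agree everywhere. -/
theorem lifts_eq_of_agree_at_one_index {V W : Type*}
    {Γ : SimpleGraph V} {Θ : SimpleGraph W} (f : Γ →g Θ)
    (hf : LocallyInjective f) {a b a' b' : V} {n : ℕ}
    (p : Γ.Walk a b) (q : Γ.Walk a' b')
    (hp : p.length = n) (hq : q.length = n)
    (h : ∀ k ≤ n, f (p.getVert k) = f (q.getVert k))
    (hi : ∃ i ≤ n, p.getVert i = q.getVert i) :
    a = a' ∧ b = b' ∧ (∀ k ≤ n, p.getVert k = q.getVert k) ∧ HEq p q := by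
  obtain ⟨i, hin, hpqi⟩ := hi
  have agree : ∀ k ≤ n, p.getVert k = q.getVert k :=
    Nat.forall_le_of_iff_succ hin hpqi fun k hk ↦
      hf.getVert_eq_iff_getVert_succ_eq (by omega) (by omega) (h k (by omega)) (h (k + 1) hk)
  have ha : a = a' := by simpa using agree 0 (Nat.zero_le n)
  have hb : b = b' := by
    simpa [← hp, p.getVert_length, hp ▸ hq ▸ q.getVert_length] using agree n le_rfl
  subst ha hb
  exact ⟨rfl, rfl, agree, heq_of_eq <| Walk.ext_getVert_le_length (hp.trans hq.symm)
    fun k hk ↦ agree k (hp ▸ hk)⟩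
end

section
/- Let c be a closed walk of length n ≥ 3 based at a vertex a in a simple graph which is cyclically reduced: c.getVert (k−1) ≠ c.getVert (k+1) for all 1 ≤ k ≤ n−1, and c.getVert 1 ≠ c.getVert (n−1). Then for every integer m ≥ 1, the m-fold concatenation c^m = c.append(c).append…(c) is a cyclically reduced closed walk of length m·n based at a. (This is the replacement of an immersed cycle C_m → Γ by its composition with the covering map C_{3m} → C_m used in the proof of Lemma 3.1 to ensure boundary cycles have length at least 3.) -/
/-!
A closed walk `c` of length `n` is cyclically reduced exactly when its vertex sequence, read
periodically as `j ↦ c.getVert (j % n)`, never repeats at distance two. The `m`-fold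
concatenation of `c` has the same periodic vertex sequence, hence inherits this property.
-/

open SimpleGraph

/-- The `m`-fold concatenation of a closed walk with itself. -/
def SimpleGraph.Walk.iterConcat {V : Type*} {G : SimpleGraph V} {a : V}
    (c : G.Walk a a) : ℕ → G.Walk a a
  | 0 => SimpleGraph.Walk.nil
  | m + 1 => (SimpleGraph.Walk.iterConcat c m).append c

namespace SimpleGraph.Walk

variable {V : Type*} {G : SimpleGraph V} {u : V}

def IsCyclicallyReduced (c : G.Walk u u) : Prop :=
  (∀ k, 1 ≤ k → k ≤ c.length - 1 → c.getVert (k - 1) ≠ c.getVert (k + 1)) ∧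
    c.getVert 1 ≠ c.getVert (c.length - 1)

def cyclicVert (c : G.Walk u u) (j : ℕ) : V :=
  c.getVert (j % c.length)

theorem cyclicVert_of_le (c : G.Walk u u) {j : ℕ} (hj : j ≤ c.length) :
    c.cyclicVert j = c.getVert j := by
  rcases hj.lt_or_eq with hj | rfl
  · rw [cyclicVert, Nat.mod_eq_of_lt hj]
  · rw [cyclicVert, Nat.mod_self, getVert_zero, getVert_length]

theorem cyclicVert_add_mul_length (c : G.Walk u u) (j m : ℕ) :
    c.cyclicVert (j + m * c.length) = c.cyclicVert j := by
  rw [cyclicVert, cyclicVert, Nat.add_mul_mod_self_right]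

theorem IsCyclicallyReduced.three_le_length {c : G.Walk u u} (hc : c.IsCyclicallyReduced) :
    3 ≤ c.length := by
  by_contra! hlt
  apply hc.2
  interval_cases h : c.length
  · rw [getVert_of_length_le c (by omega), getVert_of_length_le c (by omega)]
  · rw [getVert_of_length_le c h.le, Nat.sub_self, getVert_zero]
  · rfl

theorem isCyclicallyReduced_iff_cyclicVert_ne {c : G.Walk u u} (hc : 3 ≤ c.length) :
    c.IsCyclicallyReduced ↔ ∀ j, c.cyclicVert j ≠ c.cyclicVert (j + 2) := by
  have cyclicVert_length_add_one : c.cyclicVert (c.length + 1) = c.getVert 1 := by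
    rw [add_comm, ← one_mul c.length, cyclicVert_add_mul_length,
      c.cyclicVert_of_le (by omega)]
  constructor
  · rintro ⟨hnb, hcyc⟩ j
    obtain ⟨r, q, hr, rfl⟩ : ∃ r q, r < c.length ∧ j = r + q * c.length :=
      ⟨j % c.length, j / c.length, Nat.mod_lt _ (by omega), (Nat.mod_add_div' j _).symm⟩
    rw [add_right_comm, cyclicVert_add_mul_length, cyclicVert_add_mul_length,
      c.cyclicVert_of_le hr.le]
    rcases Nat.lt_or_ge (r + 2) (c.length + 1) with hr2 | hr2
    · rw [c.cyclicVert_of_le (by omega)]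
      exact hnb (r + 1) (by omega) (by omega)
    · rw [show r + 2 = c.length + 1 by omega, cyclicVert_length_add_one,
        show r = c.length - 1 by omega]
      exact hcyc.symm
  · intro h
    refine ⟨fun k hk1 hk2 => ?_, ?_⟩
    · have := h (k - 1)
      rwa [c.cyclicVert_of_le (by omega), c.cyclicVert_of_le (by omega),
        show k - 1 + 2 = k + 1 by omega] at this
    · have := h (c.length - 1)
      rw [c.cyclicVert_of_le (by omega), show c.length - 1 + 2 = c.length + 1 by omega,
        cyclicVert_length_add_one] at this
      exact this.symm

theorem length_iterConcat (c : G.Walk u u) (m : ℕ) :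
    (c.iterConcat m).length = m * c.length := by
  induction m with
  | zero => rw [iterConcat, length_nil, Nat.zero_mul]
  | succ m ih => rw [iterConcat, length_append, ih, Nat.succ_mul]

theorem getVert_iterConcat (c : G.Walk u u) {m k : ℕ} (hk : k ≤ m * c.length) :
    (c.iterConcat m).getVert k = c.cyclicVert k := by
  induction m generalizing k with
  | zero =>
    obtain rfl : k = 0 := by simpa using hk
    rw [c.cyclicVert_of_le (Nat.zero_le _), getVert_zero, getVert_zero]
  | succ m ih =>
    rw [iterConcat, getVert_append', length_iterConcat]
    split_ifs with hkm
    · exact ih hkm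
    · rw [← c.cyclicVert_of_le (by rw [Nat.succ_mul] at hk; omega),
        ← c.cyclicVert_add_mul_length _ m, Nat.sub_add_cancel (by omega)]

theorem cyclicVert_iterConcat (c : G.Walk u u) {m : ℕ} (hm : m ≠ 0) :
    (c.iterConcat m).cyclicVert = c.cyclicVert := by
  funext j
  rcases Nat.eq_zero_or_pos c.length with h0 | hpos
  · rw [cyclicVert, cyclicVert, getVert_of_length_le _ (by simp [length_iterConcat, h0]),
      getVert_of_length_le _ (by simp [h0])]
  · have hmn : 0 < m * c.length := Nat.mul_pos (Nat.pos_of_ne_zero hm) hpos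
    rw [cyclicVert, length_iterConcat, getVert_iterConcat c (Nat.mod_lt _ hmn).le, cyclicVert,
      Nat.mod_mul_left_mod]
    rfl

theorem IsCyclicallyReduced.iterConcat {c : G.Walk u u} (hc : c.IsCyclicallyReduced) {m : ℕ}
    (hm : m ≠ 0) : (c.iterConcat m).IsCyclicallyReduced := by
  have h3 := hc.three_le_length
  have h3m : 3 ≤ (c.iterConcat m).length := by
    rw [length_iterConcat]
    exact h3.trans (Nat.le_mul_of_pos_left _ (Nat.pos_of_ne_zero hm))
  rw [isCyclicallyReduced_iff_cyclicVert_ne h3m, cyclicVert_iterConcat c hm]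
  exact (isCyclicallyReduced_iff_cyclicVert_ne h3).mp hc

end SimpleGraph.Walk

theorem iterConcat_cyclicallyReduced_general {V : Type*} {G : SimpleGraph V} {a : V}
    {n : ℕ} (c : G.Walk a a) (hc : c.length = n)
    (hnb : ∀ k, 1 ≤ k → k ≤ n - 1 → c.getVert (k - 1) ≠ c.getVert (k + 1))
    (hcyc : c.getVert 1 ≠ c.getVert (n - 1))
    (m : ℕ) (hm : 1 ≤ m) :
    (c.iterConcat m).length = m * n ∧
      (∀ k, 1 ≤ k → k ≤ m * n - 1 →
        (c.iterConcat m).getVert (k - 1) ≠ (c.iterConcat m).getVert (k + 1)) ∧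
      (c.iterConcat m).getVert 1 ≠ (c.iterConcat m).getVert (m * n - 1) := by
  subst hc
  have hlen := c.length_iterConcat m
  have hcm := Walk.IsCyclicallyReduced.iterConcat ⟨hnb, hcyc⟩ (Nat.one_le_iff_ne_zero.mp hm)
  rw [Walk.IsCyclicallyReduced, hlen] at hcm
  exact ⟨hlen, hcm⟩

/-- The `m`-fold concatenation (`m ≥ 1`) of a cyclically reduced closed walk of
length `n ≥ 3` is a cyclically reduced closed walk of length `m * n`. -/
theorem iterConcat_cyclicallyReduced {V : Type*} {G : SimpleGraph V} {a : V}
    {n : ℕ} (c : G.Walk a a) (hc : c.length = n) (hn : 3 ≤ n)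
    (hnb : ∀ k, 1 ≤ k → k ≤ n - 1 → c.getVert (k - 1) ≠ c.getVert (k + 1))
    (hcyc : c.getVert 1 ≠ c.getVert (n - 1))
    (m : ℕ) (hm : 1 ≤ m) :
    (c.iterConcat m).length = m * n ∧
      (∀ k, 1 ≤ k → k ≤ m * n - 1 →
        (c.iterConcat m).getVert (k - 1) ≠ (c.iterConcat m).getVert (k + 1)) ∧
      (c.iterConcat m).getVert 1 ≠ (c.iterConcat m).getVert (m * n - 1) :=
  iterConcat_cyclicallyReduced_general c hc hnb hcyc m hm
end
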